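/- arXiv:2602.21072 — 4 statements merged into one kernel-verified Lean document; each statement's English description precedes it below -/
import Mathlib

section
/- Let P and Q be probability measures on a finite set, and f a function bounded in absolute value by R_max. Then |E_P[f] - E_Q[f]| \le 2 R_max \sqrt{1 - exp(-D_KL(P || Q))}. -/
/-! Hölder's inequality bounds the gap by `Rmax * ‖P - Q‖₁`. Jensen's inequality for `exp`
with weights `P` gives `exp (-KL / 2) ≤ ∑ √(P Q)`, and Cauchy–Schwarz applied to
`√(P Q) = √(min P Q * max P Q)` gives `(∑ √(P Q))² ≤ (∑ min P Q) (∑ max P Q) = 1 - ‖P - Q‖₁² / 4`;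
together these are the Bretagnolle–Huber bound `‖P - Q‖₁ ≤ 2 √(1 - exp (-KL))`. -/

open Real Finset

section

variable {Ω : Type*} [Fintype Ω]

theorem abs_sum_mul_sub_sum_mul_le (P Q f : Ω → ℝ) {R : ℝ} (hf : ∀ x, |f x| ≤ R) :
    |∑ x, P x * f x - ∑ x, Q x * f x| ≤ R * ∑ x, |P x - Q x| :=
  calc |∑ x, P x * f x - ∑ x, Q x * f x| = |∑ x, (P x - Q x) * f x| := by
        simp only [sub_mul, sum_sub_distrib]
    _ ≤ ∑ x, |P x - Q x| * |f x| := by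
        simpa only [abs_mul] using abs_sum_le_sum_abs (fun x ↦ (P x - Q x) * f x) univ
    _ ≤ ∑ x, |P x - Q x| * R := by gcongr with x; exact hf x
    _ = R * ∑ x, |P x - Q x| := by rw [← sum_mul, mul_comm]

theorem sum_min_mul_sum_max (P Q : Ω → ℝ) :
    (∑ x, min (P x) (Q x)) * ∑ x, max (P x) (Q x) =
      ((∑ x, P x + ∑ x, Q x) ^ 2 - (∑ x, |P x - Q x|) ^ 2) / 4 := by
  have hsum : ∑ x, min (P x) (Q x) + ∑ x, max (P x) (Q x) = ∑ x, P x + ∑ x, Q x := by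
    simp only [← sum_add_distrib, min_add_max]
  have hdiff : ∑ x, max (P x) (Q x) - ∑ x, min (P x) (Q x) = ∑ x, |P x - Q x| := by
    simp only [← sum_sub_distrib, max_sub_min_eq_abs']
  rw [← hsum, ← hdiff]
  ring

theorem sq_sum_sqrt_mul_le {P Q : Ω → ℝ} (hP0 : ∀ x, 0 ≤ P x) (hP1 : ∑ x, P x = 1)
    (hQ0 : ∀ x, 0 ≤ Q x) (hQ1 : ∑ x, Q x = 1) :
    (∑ x, √(P x * Q x)) ^ 2 ≤ 1 - (∑ x, |P x - Q x|) ^ 2 / 4 := by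
  have hCS : (∑ x, √(P x * Q x)) ^ 2 ≤ (∑ x, min (P x) (Q x)) * ∑ x, max (P x) (Q x) :=
    sum_sq_le_sum_mul_sum_of_sq_le_mul _ (fun x _ ↦ le_min (hP0 x) (hQ0 x))
      (fun x _ ↦ le_max_of_le_left (hP0 x))
      (fun x _ ↦ by rw [sq_sqrt (mul_nonneg (hP0 x) (hQ0 x)), min_mul_max])
  rw [sum_min_mul_sum_max, hP1, hQ1] at hCS
  linarith

theorem mul_exp_half_log_div {p q : ℝ} (hp : 0 ≤ p) (hpq : 0 < p → 0 < q) :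
    p * exp (log (q / p) / 2) = √(p * q) := by
  rcases hp.eq_or_lt with rfl | hp
  · simp
  have hq := hpq hp
  rw [exp_half, exp_log (div_pos hq hp), sqrt_div' _ hp.le, sqrt_mul hp.le]
  nth_rewrite 1 [← mul_self_sqrt hp.le]
  field_simp

theorem exp_neg_half_sum_mul_log_div_le {P Q : Ω → ℝ} (hP0 : ∀ x, 0 ≤ P x)
    (hP1 : ∑ x, P x = 1) (hac : ∀ x, 0 < P x → 0 < Q x) :
    exp (-(∑ x, P x * log (P x / Q x)) / 2) ≤ ∑ x, √(P x * Q x) := by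
  have hJensen := convexOn_exp.map_sum_le (t := univ) (w := P)
    (p := fun x ↦ log (Q x / P x) / 2) (fun x _ ↦ hP0 x) hP1 (fun x _ ↦ Set.mem_univ _)
  simp only [smul_eq_mul] at hJensen
  have hexponent : ∑ x, P x * (log (Q x / P x) / 2) = -(∑ x, P x * log (P x / Q x)) / 2 := by
    simp only [← inv_div (P _), log_inv, neg_div, sum_div, ← sum_neg_distrib, mul_div_assoc, mul_neg]
  rwa [hexponent, sum_congr rfl fun x _ ↦ mul_exp_half_log_div (hP0 x) (hac x)] at hJensen

theorem sum_abs_sub_le_two_sqrt_one_sub_exp_neg {P Q : Ω → ℝ} (hP0 : ∀ x, 0 ≤ P x)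
    (hP1 : ∑ x, P x = 1) (hQ0 : ∀ x, 0 ≤ Q x) (hQ1 : ∑ x, Q x = 1)
    (hac : ∀ x, 0 < P x → 0 < Q x) :
    ∑ x, |P x - Q x| ≤ 2 * √(1 - exp (-∑ x, P x * log (P x / Q x))) := by
  set T := ∑ x, |P x - Q x|
  set K := ∑ x, P x * log (P x / Q x)
  have hexp : exp (-K) ≤ 1 - T ^ 2 / 4 :=
    calc exp (-K) = exp (-K / 2) ^ 2 := by rw [← exp_nat_mul]; ring_nf
      _ ≤ (∑ x, √(P x * Q x)) ^ 2 := by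
        gcongr; exact exp_neg_half_sum_mul_log_div_le hP0 hP1 hac
      _ ≤ 1 - T ^ 2 / 4 := sq_sum_sqrt_mul_le hP0 hP1 hQ0 hQ1
  have hT : 0 ≤ T := sum_nonneg fun x _ ↦ abs_nonneg _
  have := abs_le_sqrt (x := T / 2) (y := 1 - exp (-K)) (by linarith)
  rw [abs_of_nonneg (by positivity)] at this
  linarith

end

/-- Hölder + Bretagnolle–Huber bound on difference of expectations. -/
theorem expectation_gap_bretagnolle_huber
    {Ω : Type*} [Fintype Ω]
    (P Q : Ω → ℝ) (f : Ω → ℝ) (Rmax : ℝ)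
    (hP0 : ∀ x, 0 ≤ P x) (hP1 : ∑ x, P x = 1)
    (hQ0 : ∀ x, 0 ≤ Q x) (hQ1 : ∑ x, Q x = 1)
    (hac : ∀ x, 0 < P x → 0 < Q x)
    (hf : ∀ x, |f x| ≤ Rmax) :
    |(∑ x, P x * f x) - ∑ x, Q x * f x| ≤
      2 * Rmax * Real.sqrt (1 - Real.exp (-(∑ x, P x * Real.log (P x / Q x)))) := by
  obtain ⟨x₀⟩ : Nonempty Ω :=
    univ_nonempty_iff.mp (nonempty_of_sum_ne_zero (hP1 ▸ one_ne_zero))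
  have hR : 0 ≤ Rmax := (abs_nonneg _).trans (hf x₀)
  calc |(∑ x, P x * f x) - ∑ x, Q x * f x| ≤ Rmax * ∑ x, |P x - Q x| :=
        abs_sum_mul_sub_sum_mul_le P Q f hf
    _ ≤ Rmax * (2 * √(1 - exp (-∑ x, P x * log (P x / Q x)))) :=
        mul_le_mul_of_nonneg_left (sum_abs_sub_le_two_sqrt_one_sub_exp_neg hP0 hP1 hQ0 hQ1 hac) hR
    _ = 2 * Rmax * √(1 - exp (-∑ x, P x * log (P x / Q x))) := by ring
end

section
/- (Bretagnolle–Huber inequality) For any two probability measures P and Q on a finite set, the total variation distance satisfies D_TV(P, Q) \le \sqrt{1 - exp(-D_KL(P || Q))}. -/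
/-!
Both sides are compared through the Bhattacharyya coefficient `BC = ∑ √(P Q)`. Jensen's inequality
for `exp`, with weights `P` at the points `log (Q / P) / 2`, gives `exp (-KL / 2) ≤ BC`; Cauchy–Schwarz
with `√(P Q) ^ 2 = min P Q * max P Q` gives `BC ^ 2 ≤ (∑ min P Q) (∑ max P Q) = (1 - TV) (1 + TV)`.
-/

open Finset Real

theorem mul_exp_half_log_div_le_sqrt_mul {p q : ℝ} (hp : 0 ≤ p) (hpq : 0 < p → 0 < q) :
    p * exp (log (q / p) / 2) ≤ √(p * q) := by
  rcases hp.eq_or_lt with rfl | hp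
  · simp
  have hq := hpq hp
  have hpq_eq : p * q = p ^ 2 * (q / p) := by field_simp
  rw [exp_half, exp_log (div_pos hq hp), hpq_eq, sqrt_mul (sq_nonneg p), sqrt_sq hp.le]

section

variable {ι : Type*} (s : Finset ι) (P Q : ι → ℝ)

theorem sum_min_add_sum_max :
    ∑ i ∈ s, min (P i) (Q i) + ∑ i ∈ s, max (P i) (Q i) = ∑ i ∈ s, P i + ∑ i ∈ s, Q i := by
  simp only [← sum_add_distrib, min_add_max]

theorem sum_max_sub_sum_min :
    ∑ i ∈ s, max (P i) (Q i) - ∑ i ∈ s, min (P i) (Q i) = ∑ i ∈ s, |P i - Q i| := by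
  simp only [← sum_sub_distrib, max_sub_min_eq_abs, abs_sub_comm]

variable {P Q}

theorem exp_neg_half_sum_mul_log_div_le_sum_sqrt_mul (hP0 : ∀ i ∈ s, 0 ≤ P i)
    (hP1 : ∑ i ∈ s, P i = 1) (hPQ : ∀ i ∈ s, 0 < P i → 0 < Q i) :
    exp (-(∑ i ∈ s, P i * log (P i / Q i)) / 2) ≤ ∑ i ∈ s, √(P i * Q i) := by
  have hmean : -(∑ i ∈ s, P i * log (P i / Q i)) / 2 = ∑ i ∈ s, P i • (log (Q i / P i) / 2) := by
    rw [← sum_neg_distrib, sum_div]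
    refine sum_congr rfl fun i _ => ?_
    rw [smul_eq_mul, ← inv_div (P i), log_inv]
    ring
  calc exp (-(∑ i ∈ s, P i * log (P i / Q i)) / 2)
      ≤ ∑ i ∈ s, P i • exp (log (Q i / P i) / 2) := by
        rw [hmean]
        exact convexOn_exp.map_sum_le hP0 hP1 fun _ _ => Set.mem_univ _
    _ ≤ ∑ i ∈ s, √(P i * Q i) :=
        sum_le_sum fun i hi => mul_exp_half_log_div_le_sqrt_mul (hP0 i hi) (hPQ i hi)

theorem sq_sum_sqrt_mul_le_sum_min_mul_sum_max (hP0 : ∀ i ∈ s, 0 ≤ P i)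
    (hQ0 : ∀ i ∈ s, 0 ≤ Q i) :
    (∑ i ∈ s, √(P i * Q i)) ^ 2 ≤ (∑ i ∈ s, min (P i) (Q i)) * ∑ i ∈ s, max (P i) (Q i) :=
  sum_sq_le_sum_mul_sum_of_sq_le_mul s (fun i hi => le_min (hP0 i hi) (hQ0 i hi))
    (fun i hi => (hP0 i hi).trans (le_max_left _ _)) fun i hi => by
      rw [sq_sqrt (mul_nonneg (hP0 i hi) (hQ0 i hi)), min_mul_max]

theorem sq_sum_sqrt_mul_le_one_sub_sq_half_sum_abs_sub (hP0 : ∀ i ∈ s, 0 ≤ P i)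
    (hP1 : ∑ i ∈ s, P i = 1) (hQ0 : ∀ i ∈ s, 0 ≤ Q i) (hQ1 : ∑ i ∈ s, Q i = 1) :
    (∑ i ∈ s, √(P i * Q i)) ^ 2 ≤ 1 - ((1 / 2) * ∑ i ∈ s, |P i - Q i|) ^ 2 := by
  have hmin : ∑ i ∈ s, min (P i) (Q i) = 1 - (1 / 2) * ∑ i ∈ s, |P i - Q i| := by
    linarith [sum_min_add_sum_max s P Q, sum_max_sub_sum_min s P Q]
  have hmax : ∑ i ∈ s, max (P i) (Q i) = 1 + (1 / 2) * ∑ i ∈ s, |P i - Q i| := by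
    linarith [sum_min_add_sum_max s P Q, sum_max_sub_sum_min s P Q]
  calc (∑ i ∈ s, √(P i * Q i)) ^ 2
      ≤ (∑ i ∈ s, min (P i) (Q i)) * ∑ i ∈ s, max (P i) (Q i) :=
        sq_sum_sqrt_mul_le_sum_min_mul_sum_max s hP0 hQ0
    _ = 1 - ((1 / 2) * ∑ i ∈ s, |P i - Q i|) ^ 2 := by rw [hmin, hmax]; ring

end

/-- Bretagnolle–Huber inequality for total variation distance
(stated in the nontrivial case where P is absolutely continuous w.r.t. Q,
so that the KL divergence is finite). -/
theorem bretagnolle_huber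
    {Ω : Type*} [Fintype Ω]
    (P Q : Ω → ℝ)
    (hP0 : ∀ x, 0 ≤ P x) (hP1 : ∑ x, P x = 1)
    (hQ0 : ∀ x, 0 ≤ Q x) (hQ1 : ∑ x, Q x = 1)
    (hac : ∀ x, 0 < P x → 0 < Q x) :
    (1 / 2) * ∑ x, |P x - Q x| ≤
      Real.sqrt (1 - Real.exp (-(∑ x, P x * Real.log (P x / Q x)))) := by
  set KL := ∑ x, P x * log (P x / Q x)
  have hBC := exp_neg_half_sum_mul_log_div_le_sum_sqrt_mul univ (fun x _ => hP0 x) hP1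
    fun x _ => hac x
  have hLeCam := sq_sum_sqrt_mul_le_one_sub_sq_half_sum_abs_sub univ (fun x _ => hP0 x) hP1
    (fun x _ => hQ0 x) hQ1
  refine le_sqrt_of_sq_le ?_
  have hKL : exp (-KL) ≤ (∑ x, √(P x * Q x)) ^ 2 :=
    calc exp (-KL) = exp (-KL / 2) ^ 2 := by rw [← exp_nat_mul]; push_cast; ring_nf
      _ ≤ (∑ x, √(P x * Q x)) ^ 2 := pow_le_pow_left₀ (exp_nonneg _) hBC 2
  linarith
end

section
/- (Telescoping lemma / simulation lemma) Let M1 = (S, A, P1, r, \gamma) and M2 = (S, A, P2, r, \gamma) be two MDPs on finite state and action spaces differing only in transition dynamics, with 0 \le \gamma < 1. For any stationary policy \pi, the difference in discounted returns satisfies J_{M1}(\pi) - J_{M2}(\pi) = (\gamma/(1-\gamma)) E_{(s,a) \sim \rho^{\pi}_{M1}}[ E_{s' \sim P1(\cdot|s,a)}[V^{\pi}_{M2}(s')] - E_{s' \sim P2(\cdot|s,a)}[V^{\pi}_{M2}(s')] ]. -/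
/-- telescoping (simulation) lemma for two MDPs differing only in dynamics. -/
theorem telescoping_lemma
    {S A : Type*} [Fintype S] [Fintype A]
    (P1 P2 : S → A → S → ℝ) (π : S → A → ℝ) (r : S → A → ℝ)
    (γ : ℝ) (hγ0 : 0 ≤ γ) (hγ1 : γ < 1)
    (ρ0 : S → ℝ)
    (hP1 : ∀ s a, (∀ s', 0 ≤ P1 s a s') ∧ ∑ s', P1 s a s' = 1)
    (hP2 : ∀ s a, (∀ s', 0 ≤ P2 s a s') ∧ ∑ s', P2 s a s' = 1)
    (hπ : ∀ s, (∀ a, 0 ≤ π s a) ∧ ∑ a, π s a = 1)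
    (hρ0 : (∀ s, 0 ≤ ρ0 s) ∧ ∑ s, ρ0 s = 1)
    (V1 V2 : S → ℝ)
    (hV1 : ∀ s, V1 s = ∑ a, π s a * (r s a + γ * ∑ s', P1 s a s' * V1 s'))
    (hV2 : ∀ s, V2 s = ∑ a, π s a * (r s a + γ * ∑ s', P2 s a s' * V2 s'))
    (ρ : S → A → ℝ)
    (hρ : ∀ s a, ρ s a =
      π s a * ((1 - γ) * ρ0 s + γ * ∑ s', ∑ a', ρ s' a' * P1 s' a' s)) :
    (∑ s, ρ0 s * V1 s) - (∑ s, ρ0 s * V2 s) =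
      (γ / (1 - γ)) * ∑ s, ∑ a, ρ s a *
        ((∑ s', P1 s a s' * V2 s') - (∑ s', P2 s a s' * V2 s')) := by
  have h1γ : (1:ℝ) - γ ≠ 0 := by linarith
  set Δ : S → ℝ := fun s => V1 s - V2 s with hΔdef
  set g : S → A → ℝ :=
    fun s a => (∑ s', P1 s a s' * V2 s') - (∑ s', P2 s a s' * V2 s') with hgdef
  set m : S → ℝ :=
    fun s => (1 - γ) * ρ0 s + γ * ∑ s', ∑ a', ρ s' a' * P1 s' a' s with hmdef
  have hρm : ∀ s a, ρ s a = π s a * m s := fun s a => hρ s a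
  -- Bellman equation for the difference
  have hBell : ∀ s, Δ s = γ * ∑ a, π s a * ((∑ s', P1 s a s' * Δ s') + g s a) := by
    intro s
    have hsub : ∀ a, ∑ s', P1 s a s' * Δ s'
        = (∑ s', P1 s a s' * V1 s') - (∑ s', P1 s a s' * V2 s') := by
      intro a
      rw [← Finset.sum_sub_distrib]
      exact Finset.sum_congr rfl fun s' _ => by simp [hΔdef, mul_sub]
    have : Δ s = (∑ a, π s a * (r s a + γ * ∑ s', P1 s a s' * V1 s'))
        - (∑ a, π s a * (r s a + γ * ∑ s', P2 s a s' * V2 s')) := by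
      simp only [hΔdef]; rw [← hV1 s, ← hV2 s]
    rw [this, ← Finset.sum_sub_distrib, Finset.mul_sum]
    refine Finset.sum_congr rfl fun a _ => ?_
    rw [hsub a]
    simp only [hgdef]
    ring
  -- key identity
  have key : ∑ s, m s * Δ s =
      (∑ s', (m s' - (1 - γ) * ρ0 s') * Δ s')
        + γ * ∑ s, ∑ a, ρ s a * g s a := by
    have step1 : ∑ s, m s * Δ s
        = ∑ s, ∑ a, γ * (ρ s a * ((∑ s', P1 s a s' * Δ s') + g s a)) := by
      refine Finset.sum_congr rfl fun s _ => ?_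
      rw [hBell s, ← mul_assoc, Finset.mul_sum]
      refine Finset.sum_congr rfl fun a _ => ?_
      rw [hρm s a]; ring
    have step2 : ∑ s, ∑ a, γ * (ρ s a * ((∑ s', P1 s a s' * Δ s') + g s a))
        = γ * (∑ s, ∑ a, ρ s a * (∑ s', P1 s a s' * Δ s'))
          + γ * ∑ s, ∑ a, ρ s a * g s a := by
      rw [Finset.mul_sum, Finset.mul_sum, ← Finset.sum_add_distrib]
      refine Finset.sum_congr rfl fun s _ => ?_
      rw [Finset.mul_sum, Finset.mul_sum, ← Finset.sum_add_distrib]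
      refine Finset.sum_congr rfl fun a _ => ?_
      ring
    have step3 : ∑ s, ∑ a, ρ s a * (∑ s', P1 s a s' * Δ s')
        = ∑ s', (∑ s, ∑ a, ρ s a * P1 s a s') * Δ s' := by
      have l1 : ∀ s, ∑ a, ρ s a * (∑ s', P1 s a s' * Δ s')
          = ∑ s', ∑ a, ρ s a * P1 s a s' * Δ s' := by
        intro s
        rw [Finset.sum_comm]
        refine Finset.sum_congr rfl fun a _ => ?_
        rw [Finset.mul_sum]
        exact Finset.sum_congr rfl fun s' _ => by ring
      calc ∑ s, ∑ a, ρ s a * (∑ s', P1 s a s' * Δ s')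
          = ∑ s, ∑ s', ∑ a, ρ s a * P1 s a s' * Δ s' :=
            Finset.sum_congr rfl fun s _ => l1 s
        _ = ∑ s', ∑ s, ∑ a, ρ s a * P1 s a s' * Δ s' := Finset.sum_comm ..
        _ = ∑ s', (∑ s, ∑ a, ρ s a * P1 s a s') * Δ s' := by
            refine Finset.sum_congr rfl fun s' _ => ?_
            rw [Finset.sum_mul]
            refine Finset.sum_congr rfl fun s _ => ?_
            rw [Finset.sum_mul]
    have step4 : ∀ s', γ * (∑ s, ∑ a, ρ s a * P1 s a s')
        = m s' - (1 - γ) * ρ0 s' := by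
      intro s'; simp only [hmdef]; ring
    rw [step1, step2, step3]
    congr 1
    rw [Finset.mul_sum]
    refine Finset.sum_congr rfl fun s' _ => ?_
    rw [← mul_assoc, step4 s']
  have expand : ∑ s', (m s' - (1 - γ) * ρ0 s') * Δ s'
      = (∑ s, m s * Δ s) - (1 - γ) * ∑ s, ρ0 s * Δ s := by
    rw [Finset.mul_sum, ← Finset.sum_sub_distrib]
    refine Finset.sum_congr rfl fun s _ => by ring
  have main : (1 - γ) * ∑ s, ρ0 s * Δ s = γ * ∑ s, ∑ a, ρ s a * g s a := by
    rw [expand] at key; linarith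
  have lhs : (∑ s, ρ0 s * V1 s) - (∑ s, ρ0 s * V2 s) = ∑ s, ρ0 s * Δ s := by
    rw [← Finset.sum_sub_distrib]
    refine Finset.sum_congr rfl fun s _ => by simp [hΔdef, mul_sub]
  rw [lhs]
  rw [div_mul_eq_mul_div, eq_div_iff h1γ]
  linarith [main]
end

section
/- If the KL divergence between the trajectory distributions induced by a policy under two dynamics is at most \epsilon - B, then the discounted returns under the two dynamics differ by at most 2 R_max \sqrt{1 - e^{B - \epsilon}}, where R_max bounds the absolute discounted return of any trajectory. -/
open Finset

/-- Jensen's inequality for `exp` with finite weighted sums. -/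
lemma exp_sum_le {T : Type*} [Fintype T] (w x : T → ℝ)
    (hw0 : ∀ τ, 0 ≤ w τ) (hw1 : ∑ τ, w τ = 1) :
    Real.exp (∑ τ, w τ * x τ) ≤ ∑ τ, w τ * Real.exp (x τ) := by
  have := convexOn_exp.map_sum_le (t := Finset.univ) (w := w) (p := x)
    (fun i _ => hw0 i) hw1 (fun i _ => Set.mem_univ _)
  simpa using this

/-- no-exploit bound on returns from a KL bound on trajectory distributions. -/
theorem no_exploit_return_gap
    {T : Type*} [Fintype T]
    (Psrc Ptar : T → ℝ) (G : T → ℝ) (Rmax B ε : ℝ)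
    (hPsrc0 : ∀ τ, 0 ≤ Psrc τ) (hPsrc1 : ∑ τ, Psrc τ = 1)
    (hPtar0 : ∀ τ, 0 ≤ Ptar τ) (hPtar1 : ∑ τ, Ptar τ = 1)
    (hac : ∀ τ, 0 < Psrc τ → 0 < Ptar τ)
    (hG : ∀ τ, |G τ| ≤ Rmax)
    (hεB : 0 ≤ ε - B)
    (hKL : ∑ τ, Psrc τ * Real.log (Psrc τ / Ptar τ) ≤ ε - B) :
    |(∑ τ, Psrc τ * G τ) - ∑ τ, Ptar τ * G τ| ≤
      2 * Rmax * Real.sqrt (1 - Real.exp (B - ε)) := by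
  -- notation
  set m : T → ℝ := fun τ => min (Psrc τ) (Ptar τ) with hm
  set M : T → ℝ := fun τ => max (Psrc τ) (Ptar τ) with hM
  set D : ℝ := ∑ τ, |Psrc τ - Ptar τ| with hD
  have hD0 : 0 ≤ D := Finset.sum_nonneg fun τ _ => abs_nonneg _
  -- Rmax ≥ 0 (T is nonempty since the Psrc sums to 1)
  have hTne : Nonempty T := by
    by_contra h
    rw [not_nonempty_iff] at h
    rw [Finset.sum_of_isEmpty] at hPsrc1
    norm_num at hPsrc1
  obtain ⟨τ0⟩ := hTne
  have hR0 : 0 ≤ Rmax := le_trans (abs_nonneg _) (hG τ0)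
  -- sums of min and max
  have hmM : (∑ τ, m τ) + (∑ τ, M τ) = 2 := by
    rw [← Finset.sum_add_distrib]
    have : ∀ τ, m τ + M τ = Psrc τ + Ptar τ := fun τ => min_add_max _ _
    simp only [this]
    rw [Finset.sum_add_distrib, hPsrc1, hPtar1]; norm_num
  have hMm : (∑ τ, M τ) - (∑ τ, m τ) = D := by
    rw [hD, ← Finset.sum_sub_distrib]
    congr 1; funext τ
    rw [hM, hm]
    simp [max_sub_min_eq_abs, abs_sub_comm]
  have hsm : ∑ τ, m τ = (2 - D) / 2 := by linarith
  have hsM : ∑ τ, M τ = (2 + D) / 2 := by linarith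
  -- Jensen step 1: exp(∑ p log (m/p)) ≤ ∑ m
  have jensen : ∀ f : T → ℝ, (∀ τ, 0 ≤ f τ) → (∀ τ, 0 < Psrc τ → 0 < f τ) →
      Real.exp (∑ τ, Psrc τ * Real.log (f τ / Psrc τ)) ≤ ∑ τ, f τ := by
    intro f hf hf'
    refine le_trans (exp_sum_le Psrc _ hPsrc0 hPsrc1) (Finset.sum_le_sum fun τ _ => ?_)
    rcases eq_or_lt_of_le (hPsrc0 τ) with h | h
    · simp [← h, hf τ]
    · have h2 := hf' τ h
      rw [Real.exp_log (by positivity), mul_div_cancel₀ _ h.ne']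
  have hm0 : ∀ τ, 0 ≤ m τ := fun τ => le_min (hPsrc0 τ) (hPtar0 τ)
  have hM0 : ∀ τ, 0 ≤ M τ := fun τ => le_trans (hPsrc0 τ) (le_max_left _ _)
  -- -KL = ∑ p log(m/p) + ∑ p log(M/p)
  have hsplit : -(∑ τ, Psrc τ * Real.log (Psrc τ / Ptar τ)) =
      (∑ τ, Psrc τ * Real.log (m τ / Psrc τ)) + ∑ τ, Psrc τ * Real.log (M τ / Psrc τ) := by
    rw [← Finset.sum_add_distrib, ← Finset.sum_neg_distrib]
    refine Finset.sum_congr rfl fun τ _ => ?_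
    rcases eq_or_lt_of_le (hPsrc0 τ) with h | h
    · simp [← h]
    · have hq := hac τ h
      have hm' : 0 < m τ := lt_min h hq
      have hM' : 0 < M τ := lt_of_lt_of_le h (le_max_left _ _)
      rw [← mul_add, ← Real.log_mul (by positivity) (by positivity), ← neg_mul]
      have : m τ / Psrc τ * (M τ / Psrc τ) = (m τ * M τ) / (Psrc τ * Psrc τ) := by ring
      rw [this, min_mul_max, Real.log_div h.ne' hq.ne',
        Real.log_div (by positivity) (by positivity),
        Real.log_mul h.ne' hq.ne', Real.log_mul h.ne' h.ne']
      ring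
  -- Bretagnolle–Huber
  have hBH : Real.exp (B - ε) ≤ 1 - D ^ 2 / 4 := by
    have h1 : Real.exp (B - ε) ≤ Real.exp (-(∑ τ, Psrc τ * Real.log (Psrc τ / Ptar τ))) :=
      Real.exp_le_exp.mpr (by linarith)
    have h2 : Real.exp (-(∑ τ, Psrc τ * Real.log (Psrc τ / Ptar τ))) ≤
        (∑ τ, m τ) * (∑ τ, M τ) := by
      rw [hsplit, Real.exp_add]
      exact mul_le_mul (jensen m hm0 fun τ h => lt_min h (hac τ h))
        (jensen M hM0 fun τ h => lt_of_lt_of_le h (le_max_left _ _)) (Real.exp_nonneg _)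
        (Finset.sum_nonneg fun τ _ => hm0 τ)
    rw [hsm, hsM] at h2
    nlinarith [h1.trans h2]
  -- hence D ≤ 2 √(1 - exp(B-ε))
  have hDle : D ≤ 2 * Real.sqrt (1 - Real.exp (B - ε)) := by
    have : D / 2 ≤ Real.sqrt (1 - Real.exp (B - ε)) := by
      rw [show D / 2 = Real.sqrt ((D / 2) ^ 2) by rw [Real.sqrt_sq (by positivity)]]
      apply Real.sqrt_le_sqrt
      nlinarith
    linarith
  -- final bound
  have hmain : |(∑ τ, Psrc τ * G τ) - ∑ τ, Ptar τ * G τ| ≤ Rmax * D := by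
    rw [← Finset.sum_sub_distrib]
    refine le_trans (Finset.abs_sum_le_sum_abs _ _) ?_
    rw [hD, Finset.mul_sum]
    refine Finset.sum_le_sum fun τ _ => ?_
    rw [← sub_mul, abs_mul, mul_comm]
    exact mul_le_mul_of_nonneg_right (hG τ) (abs_nonneg _)
  calc |(∑ τ, Psrc τ * G τ) - ∑ τ, Ptar τ * G τ| ≤ Rmax * D := hmain
    _ ≤ Rmax * (2 * Real.sqrt (1 - Real.exp (B - ε))) :=
        mul_le_mul_of_nonneg_left hDle hR0
    _ = 2 * Rmax * Real.sqrt (1 - Real.exp (B - ε)) := by ring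
end
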